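/- arXiv:2604.16072 — 2 statements merged into one kernel-verified Lean document; each statement's English description precedes it below -/
import Mathlib

section
/- Let T : H₁ → H₂ be a compact operator between Hilbert spaces with singular values s₁ ≥ s₂ ≥ …. Then for every bounded operator A : H₁ → H₂ with rank A ≤ N, ‖T − A‖ ≥ s_{N+1}(T). Consequently inf{‖T − A‖ : rank A ≤ N} = s_{N+1}(T), attained by the truncated singular value expansion. -/
/-!
If `rank A ≤ N`, then `A` kills a nonzero vector `x` of the `(N + 1)`-dimensional span of
`φ 0, …, φ N`, and there `‖T x‖² = ∑_{n ≤ N} s n² ⟪x, φ n⟫² ≥ s N² ‖x‖²`, so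
`‖T - A‖ ≥ s N`. Conversely, `T` minus the truncated expansion multiplies the coordinates
`⟪x, φ n⟫`, `n ≥ N`, by `s n ≤ s N`, so Bessel's inequality bounds its norm by `s N`.
-/

/-- The `(N+1)`-st approximation number (singular value) of a bounded operator:
the distance, in operator norm, to the set of operators of rank at most `N`. -/
noncomputable def approxNum {H₁ H₂ : Type*}
    [NormedAddCommGroup H₁] [NormedSpace ℝ H₁]
    [NormedAddCommGroup H₂] [NormedSpace ℝ H₂]
    (A : H₁ →L[ℝ] H₂) (N : ℕ) : ℝ :=
  ⨅ T : {T : H₁ →L[ℝ] H₂ // Module.rank ℝ (LinearMap.range (T : H₁ →ₗ[ℝ] H₂)) ≤ N},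
    ‖A - (T : H₁ →L[ℝ] H₂)‖

open Finset RealInnerProductSpace

section Orthonormal

variable {ι E F : Type*} [NormedAddCommGroup E] [InnerProductSpace ℝ E]
  [NormedAddCommGroup F] [InnerProductSpace ℝ F] {φ : ι → E} {ψ : ι → F}

theorem Orthonormal.norm_sum_smul_sq (hψ : Orthonormal ℝ ψ) (a : ι → ℝ) (S : Finset ι) :
    ‖∑ i ∈ S, a i • ψ i‖ ^ 2 = ∑ i ∈ S, a i ^ 2 := by
  simpa [Real.norm_eq_abs, sq_abs] using hψ.orthogonalFamily.norm_sum a S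

theorem Orthonormal.hasSum_sq_of_hasSum_smul (hψ : Orthonormal ℝ ψ) {a : ι → ℝ} {y : F}
    (h : HasSum (fun i => a i • ψ i) y) : HasSum (fun i => a i ^ 2) (‖y‖ ^ 2) := by
  simpa only [HasSum, hψ.norm_sum_smul_sq] using (Filter.Tendsto.norm h).pow 2

theorem Orthonormal.summable_smul_of_summable_sq [CompleteSpace F] (hψ : Orthonormal ℝ ψ)
    {a : ι → ℝ} (ha : Summable fun i => a i ^ 2) : Summable fun i => a i • ψ i := by
  simpa using (hψ.orthogonalFamily.summable_iff_norm_sq_summable a).2 (by simpa using ha)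

theorem Orthonormal.hasSum_inner_smul_of_mem_span (hφ : Orthonormal ℝ φ) {x : E}
    (hx : x ∈ Submodule.span ℝ (Set.range φ)) : HasSum (fun i => ⟪x, φ i⟫ • φ i) x := by
  classical
  induction hx using Submodule.span_induction with
  | mem _ h =>
    obtain ⟨j, rfl⟩ := h
    convert hasSum_ite_eq j (φ j) using 2 with i
    split_ifs with hij
    · simp [hij, hφ.norm_eq_one]
    · simp [hφ.inner_eq_zero (Ne.symm hij)]
  | zero => simp
  | add x y _ _ hx hy => simpa [inner_add_left, add_smul] using hx.add hy
  | smul c x _ hx => simpa [inner_smul_left, mul_smul] using hx.const_smul c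

theorem Orthonormal.finrank_span_image_finset [DecidableEq E] (hφ : Orthonormal ℝ φ)
    (S : Finset ι) : Module.finrank ℝ (Submodule.span ℝ (φ '' S)) = S.card := by
  rw [← card_image_of_injective _ hφ.linearIndependent.injective, ← coe_image]
  refine finrank_span_finset_eq_card ?_
  rw [coe_image]
  exact (hφ.linearIndependent.linearIndepOn _).id_image

theorem Orthonormal.inner_eq_zero_of_mem_span_image (hφ : Orthonormal ℝ φ) {S : Set ι} {x : E}
    (hx : x ∈ Submodule.span ℝ (φ '' S)) {i : ι} (hi : i ∉ S) : ⟪x, φ i⟫ = 0 := by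
  refine Submodule.mem_orthogonal_singleton_iff_inner_left.1 ?_
  refine Submodule.span_le.2 ?_ hx
  rintro _ ⟨j, hj, rfl⟩
  exact Submodule.mem_orthogonal_singleton_iff_inner_left.2
    (hφ.inner_eq_zero fun h => hi (h ▸ hj))

theorem Orthonormal.mul_norm_le_norm_of_hasSum (hφ : Orthonormal ℝ φ) (hψ : Orthonormal ℝ ψ)
    {t : ι → ℝ} {c : ℝ} (hc : 0 ≤ c) {x : E} {y : F}
    (ht : ∀ i, ⟪x, φ i⟫ ≠ 0 → c ≤ |t i|) (hx : HasSum (fun i => ⟪x, φ i⟫ • φ i) x)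
    (hy : HasSum (fun i => (t i * ⟪x, φ i⟫) • ψ i) y) : c * ‖x‖ ≤ ‖y‖ := by
  have hsq : (c * ‖x‖) ^ 2 ≤ ‖y‖ ^ 2 := by
    rw [mul_pow]
    refine hasSum_le (fun i => ?_) ((hφ.hasSum_sq_of_hasSum_smul hx).mul_left (c ^ 2))
      (hψ.hasSum_sq_of_hasSum_smul hy)
    rw [mul_pow]
    by_cases hi : ⟪x, φ i⟫ = 0
    · simp [hi]
    · refine mul_le_mul_of_nonneg_right ?_ (sq_nonneg _)
      rw [← sq_abs (t i)]
      exact pow_le_pow_left₀ hc (ht i hi) 2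
  exact (pow_le_pow_iff_left₀ (by positivity) (norm_nonneg y) two_ne_zero).1 hsq


theorem sq_mul_real_inner_le {t c : ℝ} (ht : |t| ≤ c) (x v : E) :
    (t * ⟪x, v⟫) ^ 2 ≤ c ^ 2 * ‖⟪v, x⟫‖ ^ 2 := by
  rw [mul_pow, real_inner_comm, Real.norm_eq_abs, sq_abs, ← sq_abs t]
  exact mul_le_mul_of_nonneg_right (pow_le_pow_left₀ (abs_nonneg t) ht 2) (sq_nonneg _)

theorem Orthonormal.summable_mul_inner_smul [CompleteSpace F] (hφ : Orthonormal ℝ φ)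
    (hψ : Orthonormal ℝ ψ) {t : ι → ℝ} {c : ℝ} (ht : ∀ i, |t i| ≤ c) (x : E) :
    Summable fun i => (t i * ⟪x, φ i⟫) • ψ i :=
  hψ.summable_smul_of_summable_sq <|
    ((hφ.inner_products_summable x).mul_left (c ^ 2)).of_nonneg_of_le (fun _ => sq_nonneg _)
      fun i => sq_mul_real_inner_le (ht i) x (φ i)

theorem Orthonormal.norm_le_mul_norm_of_hasSum (hφ : Orthonormal ℝ φ) (hψ : Orthonormal ℝ ψ)
    {t : ι → ℝ} {c : ℝ} (hc : 0 ≤ c) (ht : ∀ i, |t i| ≤ c) {x : E} {y : F}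
    (hy : HasSum (fun i => (t i * ⟪x, φ i⟫) • ψ i) y) : ‖y‖ ≤ c * ‖x‖ := by
  have hsq : ‖y‖ ^ 2 ≤ (c * ‖x‖) ^ 2 :=
    calc ‖y‖ ^ 2 ≤ ∑' i, c ^ 2 * ‖⟪φ i, x⟫‖ ^ 2 :=
          hasSum_le (fun i => sq_mul_real_inner_le (ht i) x (φ i))
            (hψ.hasSum_sq_of_hasSum_smul hy) ((hφ.inner_products_summable x).mul_left _).hasSum
      _ = c ^ 2 * ∑' i, ‖⟪φ i, x⟫‖ ^ 2 := tsum_mul_left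
      _ ≤ c ^ 2 * ‖x‖ ^ 2 := mul_le_mul_of_nonneg_left (hφ.tsum_inner_products_le x) (sq_nonneg c)
      _ = (c * ‖x‖) ^ 2 := (mul_pow _ _ _).symm
  exact (pow_le_pow_iff_left₀ (norm_nonneg y) (by positivity) two_ne_zero).1 hsq

end Orthonormal

theorem Submodule.exists_mem_ne_zero_map_eq_zero {K V U : Type*} [Field K] [AddCommGroup V]
    [Module K V] [AddCommGroup U] [Module K U] (W : Submodule K V) [FiniteDimensional K W]
    (f : V →ₗ[K] U) (hf : Module.rank K (LinearMap.range f) < Module.finrank K W) :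
    ∃ x ∈ W, x ≠ 0 ∧ f x = 0 := by
  set g := f.domRestrict W
  have hg : Module.finrank K (LinearMap.range g) < Module.finrank K W := by
    have : Module.rank K (LinearMap.range g) ≤ Module.rank K (LinearMap.range f) :=
      LinearMap.rank_comp_le_left W.subtype f
    rw [← Module.finrank_eq_rank] at this
    exact_mod_cast this.trans_lt hf
  obtain ⟨⟨x, hxW⟩, hx, hx0⟩ := Submodule.exists_mem_ne_zero_of_ne_bot
    (g.ker_rangeRestrict ▸ g.rangeRestrict.ker_ne_bot_of_finrank_lt hg)
  exact ⟨x, hxW, fun h => hx0 (by simp [h]), hx⟩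

theorem approxNum_eq_of_isLeast {H₁ H₂ : Type*}
    [NormedAddCommGroup H₁] [NormedSpace ℝ H₁] [NormedAddCommGroup H₂] [NormedSpace ℝ H₂]
    {T : H₁ →L[ℝ] H₂} {N : ℕ} {c : ℝ}
    (hle : ∀ A : H₁ →L[ℝ] H₂, Module.rank ℝ (LinearMap.range (A : H₁ →ₗ[ℝ] H₂)) ≤ N → c ≤ ‖T - A‖)
    {B : H₁ →L[ℝ] H₂} (hB : Module.rank ℝ (LinearMap.range (B : H₁ →ₗ[ℝ] H₂)) ≤ N)
    (hTB : ‖T - B‖ = c) : approxNum T N = c := by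
  have : Nonempty {A : H₁ →L[ℝ] H₂ // Module.rank ℝ (LinearMap.range (A : H₁ →ₗ[ℝ] H₂)) ≤ N} :=
    ⟨⟨B, hB⟩⟩
  exact le_antisymm
    (ciInf_le_of_le ⟨0, Set.forall_mem_range.2 fun _ => norm_nonneg _⟩ ⟨B, hB⟩ hTB.le)
    (le_ciInf fun A => hle A.1 A.2)

section SVD

variable {H₁ H₂ : Type*} [NormedAddCommGroup H₁] [InnerProductSpace ℝ H₁]
  [NormedAddCommGroup H₂] [InnerProductSpace ℝ H₂]
  {T : H₁ →L[ℝ] H₂} {s : ℕ → ℝ} {φ : ℕ → H₁} {ψ : ℕ → H₂}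

theorem hasSum_of_eq_tsum_svd [CompleteSpace H₂] (hmono : Antitone s) (hnonneg : ∀ n, 0 ≤ s n)
    (hφ : Orthonormal ℝ φ) (hψ : Orthonormal ℝ ψ)
    (hsvd : ∀ x, T x = ∑' n, (s n * ⟪x, φ n⟫) • ψ n) (x : H₁) :
    HasSum (fun n => (s n * ⟪x, φ n⟫) • ψ n) (T x) := by
  rw [hsvd]
  refine (hφ.summable_mul_inner_smul hψ (c := s 0) (fun n => ?_) x).hasSum
  rw [abs_of_nonneg (hnonneg n)]
  exact hmono n.zero_le

theorem le_norm_sub_of_rank_le [CompleteSpace H₂] (hmono : Antitone s) (hnonneg : ∀ n, 0 ≤ s n)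
    (hφ : Orthonormal ℝ φ) (hψ : Orthonormal ℝ ψ)
    (hsvd : ∀ x, T x = ∑' n, (s n * ⟪x, φ n⟫) • ψ n) {N : ℕ} {A : H₁ →L[ℝ] H₂}
    (hA : Module.rank ℝ (LinearMap.range (A : H₁ →ₗ[ℝ] H₂)) ≤ N) : s N ≤ ‖T - A‖ := by
  classical
  set W := Submodule.span ℝ (φ '' ↑(range (N + 1)))
  have : FiniteDimensional ℝ W :=
    FiniteDimensional.span_of_finite ℝ ((range (N + 1)).finite_toSet.image φ)
  have hW : Module.finrank ℝ W = N + 1 := by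
    rw [hφ.finrank_span_image_finset, card_range]
  obtain ⟨x, hxW, hx0, hAx⟩ := W.exists_mem_ne_zero_map_eq_zero (A : H₁ →ₗ[ℝ] H₂)
    (hA.trans_lt (by rw [hW]; exact_mod_cast N.lt_succ_self))
  have hTx : s N * ‖x‖ ≤ ‖T x‖ := by
    refine hφ.mul_norm_le_norm_of_hasSum hψ (hnonneg N) (fun n hn => ?_)
      (hφ.hasSum_inner_smul_of_mem_span (Submodule.span_mono (Set.image_subset_range _ _) hxW))
      (hasSum_of_eq_tsum_svd hmono hnonneg hφ hψ hsvd x)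
    have hnN : n ∈ range (N + 1) := by
      by_contra h
      exact hn (hφ.inner_eq_zero_of_mem_span_image hxW h)
    rw [abs_of_nonneg (hnonneg n)]
    exact hmono (Nat.le_of_lt_succ (mem_range.1 hnN))
  refine le_of_mul_le_mul_right ?_ (norm_pos_iff.2 hx0)
  calc s N * ‖x‖ ≤ ‖T x‖ := hTx
    _ = ‖(T - A) x‖ := by rw [sub_apply, show A x = 0 from hAx, sub_zero]
    _ ≤ ‖T - A‖ * ‖x‖ := (T - A).le_opNorm x

variable (s φ ψ) in
noncomputable def svdTruncation (N : ℕ) : H₁ →L[ℝ] H₂ :=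
  ∑ n ∈ range N, s n • (innerSL ℝ (φ n)).smulRight (ψ n)

theorem svdTruncation_apply (N : ℕ) (x : H₁) :
    svdTruncation s φ ψ N x = ∑ n ∈ range N, (s n * ⟪x, φ n⟫) • ψ n := by
  simp [svdTruncation, smul_smul, real_inner_comm]

theorem rank_range_svdTruncation_le (N : ℕ) :
    Module.rank ℝ (LinearMap.range (svdTruncation s φ ψ N : H₁ →ₗ[ℝ] H₂)) ≤ N := by
  classical
  have hle : LinearMap.range (svdTruncation s φ ψ N : H₁ →ₗ[ℝ] H₂) ≤
      Submodule.span ℝ ((range N).image ψ : Set H₂) := by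
    rintro _ ⟨x, rfl⟩
    rw [ContinuousLinearMap.coe_coe, svdTruncation_apply]
    exact Submodule.sum_mem _ fun n hn =>
      Submodule.smul_mem _ _ (Submodule.subset_span (mem_image_of_mem ψ hn))
  calc Module.rank ℝ (LinearMap.range (svdTruncation s φ ψ N : H₁ →ₗ[ℝ] H₂))
      ≤ ((range N).image ψ).card := (Submodule.rank_mono hle).trans (rank_span_finset_le _)
    _ ≤ N := by exact_mod_cast card_image_le.trans (card_range N).le

theorem hasSum_sub_svdTruncation [CompleteSpace H₂] (hmono : Antitone s)
    (hnonneg : ∀ n, 0 ≤ s n) (hφ : Orthonormal ℝ φ) (hψ : Orthonormal ℝ ψ)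
    (hsvd : ∀ x, T x = ∑' n, (s n * ⟪x, φ n⟫) • ψ n) (N : ℕ) (x : H₁) :
    HasSum (fun n => ((if n < N then 0 else s n) * ⟪x, φ n⟫) • ψ n)
      ((T - svdTruncation s φ ψ N) x) := by
  have hB : HasSum (fun n => if n < N then (s n * ⟪x, φ n⟫) • ψ n else 0)
      (svdTruncation s φ ψ N x) := by
    rw [svdTruncation_apply, ← sum_congr rfl fun n hn => if_pos (mem_range.1 hn)]
    exact hasSum_sum_of_ne_finset_zero fun n hn => if_neg (mt mem_range.2 hn)
  rw [sub_apply]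
  convert (hasSum_of_eq_tsum_svd hmono hnonneg hφ hψ hsvd x).sub hB using 1
  funext n
  split_ifs <;> simp

theorem norm_sub_svdTruncation_le [CompleteSpace H₂] (hmono : Antitone s)
    (hnonneg : ∀ n, 0 ≤ s n) (hφ : Orthonormal ℝ φ) (hψ : Orthonormal ℝ ψ)
    (hsvd : ∀ x, T x = ∑' n, (s n * ⟪x, φ n⟫) • ψ n) (N : ℕ) :
    ‖T - svdTruncation s φ ψ N‖ ≤ s N := by
  refine ContinuousLinearMap.opNorm_le_bound _ (hnonneg N) fun x =>
    hφ.norm_le_mul_norm_of_hasSum hψ (hnonneg N) (fun n => ?_)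
      (hasSum_sub_svdTruncation hmono hnonneg hφ hψ hsvd N x)
  split_ifs with hn
  · simpa using hnonneg N
  · rw [abs_of_nonneg (hnonneg n)]
    exact hmono (not_lt.1 hn)

end SVD

theorem stmt13_general {H₁ H₂ : Type*}
    [NormedAddCommGroup H₁] [InnerProductSpace ℝ H₁]
    [NormedAddCommGroup H₂] [InnerProductSpace ℝ H₂] [CompleteSpace H₂]
    (T : H₁ →L[ℝ] H₂)
    (s : ℕ → ℝ) (hmono : Antitone s) (hnonneg : ∀ n, 0 ≤ s n)
    (φ : ℕ → H₁) (ψ : ℕ → H₂) (hφ : Orthonormal ℝ φ) (hψ : Orthonormal ℝ ψ)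
    (hsvd : ∀ x, T x = ∑' n, (s n * (inner ℝ x (φ n) : ℝ)) • ψ n)
    (N : ℕ) :
    (∀ A : H₁ →L[ℝ] H₂,
        Module.rank ℝ (LinearMap.range (A : H₁ →ₗ[ℝ] H₂)) ≤ N → s N ≤ ‖T - A‖) ∧
    approxNum T N = s N ∧
    (∃ A : H₁ →L[ℝ] H₂,
        Module.rank ℝ (LinearMap.range (A : H₁ →ₗ[ℝ] H₂)) ≤ N ∧
        (∀ x, A x = ∑ n ∈ Finset.range N, (s n * (inner ℝ x (φ n) : ℝ)) • ψ n) ∧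
        ‖T - A‖ = s N) := by
  have hlower : ∀ A : H₁ →L[ℝ] H₂,
      Module.rank ℝ (LinearMap.range (A : H₁ →ₗ[ℝ] H₂)) ≤ N → s N ≤ ‖T - A‖ :=
    fun A => le_norm_sub_of_rank_le hmono hnonneg hφ hψ hsvd
  have hrank := rank_range_svdTruncation_le (s := s) (φ := φ) (ψ := ψ) N
  have hnorm : ‖T - svdTruncation s φ ψ N‖ = s N :=
    (norm_sub_svdTruncation_le hmono hnonneg hφ hψ hsvd N).antisymm (hlower _ hrank)
  exact ⟨hlower, approxNum_eq_of_isLeast hlower hrank hnorm,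
    svdTruncation s φ ψ N, hrank, svdTruncation_apply N, hnorm⟩

/-- Schmidt–Eckart–Young: for a compact operator `T` with singular
value decomposition `T x = Σₙ sₙ (x, φₙ) ψₙ`, every bounded operator `A` of rank
`≤ N` satisfies `‖T − A‖ ≥ s_N` (0-based `(N+1)`-st singular value), and the
infimum over all such `A` equals `s_N`, attained by the truncated expansion. -/
theorem stmt13 {H₁ H₂ : Type*}
    [NormedAddCommGroup H₁] [InnerProductSpace ℝ H₁] [CompleteSpace H₁]
    [NormedAddCommGroup H₂] [InnerProductSpace ℝ H₂] [CompleteSpace H₂]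
    (T : H₁ →L[ℝ] H₂) (hT : IsCompactOperator T)
    (s : ℕ → ℝ) (hmono : Antitone s) (hnonneg : ∀ n, 0 ≤ s n)
    (φ : ℕ → H₁) (ψ : ℕ → H₂) (hφ : Orthonormal ℝ φ) (hψ : Orthonormal ℝ ψ)
    (hsvd : ∀ x, T x = ∑' n, (s n * (inner ℝ x (φ n) : ℝ)) • ψ n)
    (N : ℕ) :
    (∀ A : H₁ →L[ℝ] H₂,
        Module.rank ℝ (LinearMap.range (A : H₁ →ₗ[ℝ] H₂)) ≤ N → s N ≤ ‖T - A‖) ∧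
    approxNum T N = s N ∧
    (∃ A : H₁ →L[ℝ] H₂,
        Module.rank ℝ (LinearMap.range (A : H₁ →ₗ[ℝ] H₂)) ≤ N ∧
        (∀ x, A x = ∑ n ∈ Finset.range N, (s n * (inner ℝ x (φ n) : ℝ)) • ψ n) ∧
        ‖T - A‖ = s N) :=
  stmt13_general T s hmono hnonneg φ ψ hφ hψ hsvd N
end

section
/- For the Volterra operator (Af)(t) = ∫_t^T k e^{-α(ρ-t)} f(ρ) dρ on L²(0,T) with k > 0, α ∈ ℝ, any eigenpair of A*A with eigenvalue μ > 0 satisfies the Sturm–Liouville problem −f''(t) + α² f(t) = (k²/μ) f(t) on (0,T) with boundary conditions f(0) = 0 and f'(T) + α f(T) = 0; conversely every solution of this boundary value problem with k²/μ > α² yields an eigenfunction of A*A with eigenvalue μ. -/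
open Set

/-- The Volterra operator `(Af)(t) = ∫_t^T k e^{-α(ρ-t)} f(ρ) dρ`. -/
noncomputable def volterraA (k α T : ℝ) (f : ℝ → ℝ) : ℝ → ℝ :=
  fun t => ∫ ρ in Ioc t T, k * Real.exp (-α * (ρ - t)) * f ρ

/-- The adjoint Volterra operator `(A*f)(t) = ∫_0^t k e^{-α(t-ρ)} f(ρ) dρ`. -/
noncomputable def volterraAstar (k α : ℝ) (f : ℝ → ℝ) : ℝ → ℝ :=
  fun t => ∫ ρ in Ioc 0 t, k * Real.exp (-α * (t - ρ)) * f ρ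

/-!
Both operators are exponentially weighted Volterra integrals, so `g = A f` and `F = A*g` solve
first-order linear ODEs: `g' = α g - k f` with `g(T) = 0`, and `F' = k g - α F` with `F(0) = 0`.
Eliminating `g` gives the boundary value problem `F'' = α² F - k² f`, `F(0) = 0`,
`F'(T) + α F(T) = 0`. If `F = μ f` on `[0, T]`, differentiating twice yields the Sturm–Liouville
problem. Conversely, if `f` solves it, `w = F - μ f` satisfies `w'' = α² w`, `w(0) = 0`,
`w'(T) + α w(T) = 0`; then `w' + α w` solves `v' = α v` with `v(T) = 0`, hence vanishes, and
`w' = -α w` with `w(0) = 0` forces `w = 0`.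
-/

open MeasureTheory intervalIntegral

lemma hasDerivAt_unique_of_eqOn_Icc {F G : ℝ → ℝ} {a b x d e : ℝ} (hab : a < b)
    (hFG : ∀ y ∈ Icc a b, F y = G y) (hx : x ∈ Icc a b)
    (hF : HasDerivAt F d x) (hG : HasDerivAt G e x) : d = e :=
  (uniqueDiffOn_Icc hab x hx).eq_deriv _ hF.hasDerivWithinAt
    (hG.hasDerivWithinAt.congr hFG (hFG x hx))

lemma eq_zero_on_Icc_of_hasDerivAt_mul {u : ℝ → ℝ} {a b c x₀ : ℝ}
    (hu : ∀ x ∈ Icc a b, HasDerivAt u (c * u x) x) (hx₀ : x₀ ∈ Icc a b) (hu₀ : u x₀ = 0) :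
    ∀ x ∈ Icc a b, u x = 0 := by
  set v : ℝ → ℝ := fun x => Real.exp (-(c * x)) * u x
  have hv : ∀ x ∈ Icc a b, HasDerivAt v 0 x := fun x hx => by
    have hexp : HasDerivAt (fun x => Real.exp (-(c * x))) (Real.exp (-(c * x)) * -c) x :=
      ((hasDerivAt_id x).const_mul c).neg.exp.congr_deriv (by simp)
    exact (hexp.mul (hu x hx)).congr_deriv (by ring)
  have hv_const := constant_of_has_deriv_right_zero
    (fun x hx => (hv x hx).continuousAt.continuousWithinAt)
    (fun x hx => (hv x (Ico_subset_Icc_self hx)).hasDerivWithinAt)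
  intro x hx
  have hvx : v x = 0 := by
    rw [hv_const x hx, ← hv_const x₀ hx₀]
    simp [v, hu₀]
  simpa [v, (Real.exp_pos _).ne'] using hvx

lemma eq_zero_on_Icc_of_hasDerivAt_sq_mul {w w' : ℝ → ℝ} {a b α : ℝ}
    (hw : ∀ x ∈ Icc a b, HasDerivAt w (w' x) x)
    (hw' : ∀ x ∈ Icc a b, HasDerivAt w' (α ^ 2 * w x) x)
    (ha : w a = 0) (hb : w' b + α * w b = 0) :
    ∀ x ∈ Icc a b, w x = 0 := by
  intro x hx
  have hab : a ≤ b := hx.1.trans hx.2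
  have hv : ∀ y ∈ Icc a b, w' y + α * w y = 0 :=
    eq_zero_on_Icc_of_hasDerivAt_mul (u := fun y => w' y + α * w y) (c := α)
      (fun y hy => ((hw' y hy).add ((hw y hy).const_mul α)).congr_deriv (by ring))
      (right_mem_Icc.2 hab) hb
  exact eq_zero_on_Icc_of_hasDerivAt_mul (c := -α)
    (fun y hy => (hw y hy).congr_deriv (by linarith [hv y hy])) (left_mem_Icc.2 hab) ha x hx

/-- The solution of `u' = k g - α u`, `u(a) = 0`; on the relevant ranges of `t` both Volterra
operators are of this form. -/
noncomputable def expVolterra (k α a : ℝ) (g : ℝ → ℝ) (t : ℝ) : ℝ :=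
  ∫ ρ in a..t, k * Real.exp (-α * (t - ρ)) * g ρ

section expVolterra

variable {k α a : ℝ} {g : ℝ → ℝ}

lemma expVolterra_self : expVolterra k α a g a = 0 :=
  integral_same

lemma expVolterra_eq_mul_integral (t : ℝ) :
    expVolterra k α a g t = k * Real.exp (-α * t) * ∫ ρ in a..t, Real.exp (α * ρ) * g ρ := by
  rw [← intervalIntegral.integral_const_mul]
  refine integral_congr fun ρ _ => ?_
  rw [show -α * (t - ρ) = -α * t + α * ρ by ring, Real.exp_add]
  ring

lemma hasDerivAt_expVolterra (hg : Continuous g) (t : ℝ) :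
    HasDerivAt (expVolterra k α a g) (k * g t - α * expVolterra k α a g t) t := by
  have hcont : Continuous fun ρ => Real.exp (α * ρ) * g ρ := by fun_prop
  have hint := (hcont.integral_hasStrictDerivAt a t).hasDerivAt
  have hexp : HasDerivAt (fun t => k * Real.exp (-α * t)) (k * (Real.exp (-α * t) * -α)) t :=
    ((hasDerivAt_id t).const_mul (-α)).exp.const_mul k |>.congr_deriv (by simp)
  have hcancel : Real.exp (-α * t) * Real.exp (α * t) = 1 := by
    rw [← Real.exp_add]; simp
  rw [funext expVolterra_eq_mul_integral]
  exact (hexp.mul hint).congr_deriv (by linear_combination k * g t * hcancel)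

lemma continuous_expVolterra (hg : Continuous g) : Continuous (expVolterra k α a g) :=
  continuous_iff_continuousAt.2 fun t => (hasDerivAt_expVolterra hg t).continuousAt

end expVolterra

lemma volterraA_eq_neg_expVolterra (k α : ℝ) (f : ℝ → ℝ) {T t : ℝ} (ht : t ≤ T) :
    volterraA k α T f t = -expVolterra k (-α) T f t := by
  rw [volterraA, expVolterra, integral_symm, ← integral_of_le ht]
  simp only [neg_neg, neg_mul, ← mul_neg, neg_sub]

lemma volterraAstar_eq_expVolterra (k α : ℝ) (g : ℝ → ℝ) {t : ℝ} (ht : 0 ≤ t) :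
    volterraAstar k α g t = expVolterra k α 0 g t := by
  rw [volterraAstar, expVolterra, integral_of_le ht]

theorem exists_volterraAstar_volterraA_boundaryValueProblem (k α T : ℝ) {f : ℝ → ℝ}
    (hf : Continuous f) :
    ∃ F F' : ℝ → ℝ, (∀ t ∈ Icc 0 T, volterraAstar k α (volterraA k α T f) t = F t) ∧
      (∀ t, HasDerivAt F (F' t) t) ∧ (∀ t, HasDerivAt F' (α ^ 2 * F t - k ^ 2 * f t) t) ∧
      F 0 = 0 ∧ F' T + α * F T = 0 := by
  set g : ℝ → ℝ := fun t => -expVolterra k (-α) T f t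
  set F := expVolterra k α 0 g
  have hg : ∀ t, HasDerivAt g (α * g t - k * f t) t := fun t =>
    (hasDerivAt_expVolterra hf t).neg.congr_deriv (by ring)
  have hF : ∀ t, HasDerivAt F (k * g t - α * F t) t :=
    hasDerivAt_expVolterra (continuous_expVolterra hf).neg
  refine ⟨F, fun t => k * g t - α * F t, fun t ht => ?_, hF,
    fun t => (((hg t).const_mul k).sub ((hF t).const_mul α)).congr_deriv (by ring),
    expVolterra_self, by simp [g, expVolterra_self]⟩
  rw [show F t = _ from (volterraAstar_eq_expVolterra k α g ht.1).symm]
  refine setIntegral_congr_fun measurableSet_Ioc fun ρ (hρ : ρ ∈ Ioc 0 t) => ?_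
  simp only [volterraA_eq_neg_expVolterra k α f (hρ.2.trans ht.2), g]

section boundaryValueProblem

variable {k α T μ : ℝ} {f F F' : ℝ → ℝ}

lemma sturmLiouville_of_eqOn_smul (hT : 0 < T) (hμ : μ ≠ 0) (hf : Differentiable ℝ f)
    (hf' : Differentiable ℝ (deriv f)) (hF : ∀ t, HasDerivAt F (F' t) t)
    (hF' : ∀ t, HasDerivAt F' (α ^ 2 * F t - k ^ 2 * f t) t) (hF0 : F 0 = 0)
    (hFT : F' T + α * F T = 0) (hFf : ∀ t ∈ Icc 0 T, F t = μ * f t) :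
    (∀ t ∈ Icc 0 T, -(deriv (deriv f) t) + α ^ 2 * f t = (k ^ 2 / μ) * f t) ∧
      f 0 = 0 ∧ deriv f T + α * f T = 0 := by
  have hd1 : ∀ t ∈ Icc 0 T, F' t = μ * deriv f t := fun t ht =>
    hasDerivAt_unique_of_eqOn_Icc hT hFf ht (hF t) ((hf t).hasDerivAt.const_mul μ)
  have hd2 : ∀ t ∈ Icc 0 T, α ^ 2 * F t - k ^ 2 * f t = μ * deriv (deriv f) t := fun t ht =>
    hasDerivAt_unique_of_eqOn_Icc hT hd1 ht (hF' t) ((hf' t).hasDerivAt.const_mul μ)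
  have h0 : (0 : ℝ) ∈ Icc 0 T := left_mem_Icc.2 hT.le
  have hT' : T ∈ Icc 0 T := right_mem_Icc.2 hT.le
  refine ⟨fun t ht => ?_, ?_, ?_⟩
  · field_simp
    linear_combination hd2 t ht - α ^ 2 * hFf t ht
  · simpa [hF0, hμ] using hFf 0 h0
  · have : μ * (deriv f T + α * f T) = 0 := by
      linear_combination -(hd1 T hT') + hFT - α * hFf T hT'
    simpa [hμ] using this

lemma eqOn_smul_of_sturmLiouville (hμ : μ ≠ 0) (hf : Differentiable ℝ f)
    (hf' : Differentiable ℝ (deriv f)) (hF : ∀ t, HasDerivAt F (F' t) t)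
    (hF' : ∀ t, HasDerivAt F' (α ^ 2 * F t - k ^ 2 * f t) t) (hF0 : F 0 = 0)
    (hFT : F' T + α * F T = 0)
    (hode : ∀ t ∈ Icc 0 T, -(deriv (deriv f) t) + α ^ 2 * f t = (k ^ 2 / μ) * f t)
    (hf0 : f 0 = 0) (hfT : deriv f T + α * f T = 0) :
    ∀ t ∈ Icc 0 T, F t = μ * f t := by
  have hw := eq_zero_on_Icc_of_hasDerivAt_sq_mul (w := fun t => F t - μ * f t)
    (w' := fun t => F' t - μ * deriv f t) (α := α)
    (fun t _ => (hF t).sub ((hf t).hasDerivAt.const_mul μ))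
    (fun t ht => ((hF' t).sub ((hf' t).hasDerivAt.const_mul μ)).congr_deriv (by
      have := hode t ht
      field_simp at this
      linear_combination this))
    (by simp [hF0, hf0]) (by linear_combination hFT - μ * hfT)
  exact fun t ht => sub_eq_zero.1 (hw t ht)

end boundaryValueProblem

theorem stmt15_general (k α T μ : ℝ) (hT : 0 < T) (hμ : 0 < μ)
    (f : ℝ → ℝ) (hf : ContDiff ℝ 2 f) :
    ((∀ t ∈ Icc 0 T, volterraAstar k α (volterraA k α T f) t = μ * f t) →
      ((∀ t ∈ Icc 0 T, -(deriv (deriv f) t) + α ^ 2 * f t = (k ^ 2 / μ) * f t) ∧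
        f 0 = 0 ∧ deriv f T + α * f T = 0)) ∧
    (k ^ 2 / μ > α ^ 2 →
      (∀ t ∈ Icc 0 T, -(deriv (deriv f) t) + α ^ 2 * f t = (k ^ 2 / μ) * f t) →
      f 0 = 0 → deriv f T + α * f T = 0 →
      ∀ t ∈ Icc 0 T, volterraAstar k α (volterraA k α T f) t = μ * f t) := by
  have hf1 : Differentiable ℝ f := hf.differentiable (by norm_num)
  have hf2 : Differentiable ℝ (deriv f) := hf.differentiable_deriv_two
  obtain ⟨F, F', hAF, hF, hF', hF0, hFT⟩ :=
    exists_volterraAstar_volterraA_boundaryValueProblem k α T hf.continuous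
  refine ⟨fun heig => ?_, fun _ hode hf0 hfT t ht => ?_⟩
  · exact sturmLiouville_of_eqOn_smul hT hμ.ne' hf1 hf2 hF hF' hF0 hFT
      fun t ht => (hAF t ht).symm.trans (heig t ht)
  · rw [hAF t ht]
    exact eqOn_smul_of_sturmLiouville hμ.ne' hf1 hf2 hF hF' hF0 hFT hode hf0 hfT t ht

/-- a (twice continuously differentiable) eigenpair of `A*A` with
eigenvalue `μ > 0` satisfies the Sturm–Liouville problem
`−f'' + α² f = (k²/μ) f` on `(0,T)` with `f(0) = 0`, `f'(T) + α f(T) = 0`;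
conversely, any solution of this boundary value problem with `k²/μ > α²` is an
eigenfunction of `A*A` with eigenvalue `μ`. -/
theorem stmt15 (k α T μ : ℝ) (hk : 0 < k) (hT : 0 < T) (hμ : 0 < μ)
    (f : ℝ → ℝ) (hf : ContDiff ℝ 2 f) :
    ((∀ t ∈ Icc 0 T, volterraAstar k α (volterraA k α T f) t = μ * f t) →
      ((∀ t ∈ Icc 0 T, -(deriv (deriv f) t) + α ^ 2 * f t = (k ^ 2 / μ) * f t) ∧
        f 0 = 0 ∧ deriv f T + α * f T = 0)) ∧
    (k ^ 2 / μ > α ^ 2 →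
      (∀ t ∈ Icc 0 T, -(deriv (deriv f) t) + α ^ 2 * f t = (k ^ 2 / μ) * f t) →
      f 0 = 0 → deriv f T + α * f T = 0 →
      ∀ t ∈ Icc 0 T, volterraAstar k α (volterraA k α T f) t = μ * f t) :=
  stmt15_general k α T μ hT hμ f hf
end
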